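/- arXiv:1601.02109 — 2 statements merged into one kernel-verified Lean document; each statement's English description precedes it below -/
import Mathlib

section
/- For every ε > 0 there exists S such that for all integers s ≥ S, R₂(s) ≤ 1/2 + ε (i.e., limsup_{s→∞} R₂(s) ≤ 1/2). -/
/-!
Write `x = M i k * M j l` and `y = M i l * M j k` as `0/1` integers: the submatrix on rows `i, j`
and columns `k, l` is invertible iff `x ≠ y`, whose indicator is `x + y - 2 x y`. Summing over all
ordered quadruples gives `2 N₂ + Σ_{k,l} d_{kl}² = t²`, where `t` is the number of ones and `d_{kl}`
the number of rows with ones in both columns `k` and `l`. As `Σ_{k,l} d_{kl} = Σ_i r_i²` for the row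
weights `r_i`, two applications of Cauchy–Schwarz give `s⁴ Σ d_{kl}² ≥ t⁴`, hence
`2 N₂ ≤ t² - t⁴/s⁴ ≤ s⁴/4`. So every `s × s` matrix has `R₂(M) ≤ s⁴ / (8 C(s,2)²) = (s/(s-1))²/2`,
which tends to `1/2`.
-/

open scoped Classical

noncomputable section

/-- The 2×2 submatrix of `M` on rows `i, j` and columns `k, l`. -/
def sub2 {s : ℕ} (M : Matrix (Fin s) (Fin s) (ZMod 2)) (i j k l : Fin s) :
    Matrix (Fin 2) (Fin 2) (ZMod 2) := !![M i k, M i l; M j k, M j l]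

/-- `N2 M` is the number of invertible 2×2 submatrices of `M`, i.e. the number of
quadruples `(i, j, k, l)` with `i < j`, `k < l` such that the 2×2 submatrix of `M`
on rows `i, j` and columns `k, l` is invertible over `𝔽₂`. -/
def N2 {s : ℕ} (M : Matrix (Fin s) (Fin s) (ZMod 2)) : ℕ :=
  (Finset.univ.filter (fun q : Fin s × Fin s × Fin s × Fin s =>
    q.1 < q.2.1 ∧ q.2.2.1 < q.2.2.2 ∧ IsUnit (sub2 M q.1 q.2.1 q.2.2.1 q.2.2.2))).card

/-- `R2 M = N2 M / (C(s,2))²`. -/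
def R2 {s : ℕ} (M : Matrix (Fin s) (Fin s) (ZMod 2)) : ℝ :=
  (N2 M : ℝ) / ((s.choose 2 : ℝ)) ^ 2

/-- `R2max s` is the maximum of `R2 M` over all invertible `s × s` matrices over `𝔽₂`. -/
def R2max (s : ℕ) : ℝ :=
  sSup {r : ℝ | ∃ M : Matrix (Fin s) (Fin s) (ZMod 2), IsUnit M ∧ r = R2 M}

open Finset Filter Topology

theorem sum_sum_eq_two_nsmul_sum_sum_ite_lt {ι M : Type*} [Fintype ι] [LinearOrder ι]
    [AddCommMonoid M] (f : ι → ι → M) (hsymm : ∀ i j, f i j = f j i) (hdiag : ∀ i, f i i = 0) :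
    ∑ i, ∑ j, f i j = 2 • ∑ i, ∑ j, if i < j then f i j else 0 := by
  have hsplit : ∀ i j, f i j = (if i < j then f i j else 0) + if j < i then f j i else 0 := by
    intro i j
    rcases lt_trichotomy i j with h | rfl | h
    · simp [h, h.not_gt]
    · simp [hdiag]
    · simp [h, h.not_gt, hsymm i j]
  calc ∑ i, ∑ j, f i j
      = ∑ i, ∑ j, (if i < j then f i j else 0) + ∑ i, ∑ j, if j < i then f j i else 0 := by
        simp only [← sum_add_distrib, ← hsplit]
    _ = _ := by rw [two_nsmul, sum_comm (f := fun i j => if j < i then f j i else 0)]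

theorem isUnit_matrix_fin_two_iff {K : Type*} [Field K] (a b c d : K) :
    IsUnit !![a, b; c, d] ↔ a * d ≠ b * c := by
  rw [Matrix.isUnit_iff_isUnit_det, Matrix.det_fin_two_of, isUnit_iff_ne_zero, sub_ne_zero]

theorem ite_mul_ne_mul_add_two_mul_val (a b c d : ZMod 2) :
    (if a * d ≠ b * c then 1 else 0) + 2 * (a.val * b.val * (c.val * d.val))
      = a.val * d.val + b.val * c.val := by
  revert a b c d; decide

theorem sum_comm_pairs {ι κ M : Type*} [Fintype ι] [Fintype κ] [AddCommMonoid M]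
    (f : ι → ι → κ → κ → M) :
    ∑ i, ∑ j, ∑ k, ∑ l, f i j k l = ∑ k, ∑ l, ∑ i, ∑ j, f i j k l := by
  calc _ = ∑ i, ∑ k, ∑ j, ∑ l, f i j k l := sum_congr rfl fun i _ => sum_comm
    _ = ∑ k, ∑ i, ∑ j, ∑ l, f i j k l := sum_comm
    _ = ∑ k, ∑ i, ∑ l, ∑ j, f i j k l :=
      sum_congr rfl fun k _ => sum_congr rfl fun i _ => sum_comm
    _ = _ := sum_congr rfl fun k _ => sum_comm

section

variable {s : ℕ} (M : Matrix (Fin s) (Fin s) (ZMod 2))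

theorem isUnit_sub2_iff (i j k l : Fin s) :
    IsUnit (sub2 M i j k l) ↔ M i k * M j l ≠ M i l * M j k :=
  isUnit_matrix_fin_two_iff ..

theorem four_mul_N2 :
    4 * N2 M = ∑ i, ∑ j, ∑ k, ∑ l, if IsUnit (sub2 M i j k l) then (1 : ℕ) else 0 := by
  have hN2 : N2 M = ∑ i, ∑ j, if i < j then
      ∑ k, ∑ l, if k < l then (if IsUnit (sub2 M i j k l) then 1 else 0) else 0 else 0 := by
    rw [N2, card_filter]
    simp only [Fintype.sum_prod_type, ite_and, sum_ite_irrel, sum_const_zero]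
  -- Invertibility survives swapping the two rows or the two columns and fails when they coincide.
  have hcols : ∀ i j, ∑ k, ∑ l, (if IsUnit (sub2 M i j k l) then 1 else 0) =
      2 * ∑ k, ∑ l, if k < l then (if IsUnit (sub2 M i j k l) then 1 else 0) else 0 := by
    intro i j
    refine sum_sum_eq_two_nsmul_sum_sum_ite_lt _ (fun k l => ?_) (fun k => ?_)
    · simp only [isUnit_sub2_iff, ne_comm]
    · simp [isUnit_sub2_iff]
  rw [hN2, show 4 = 2 * 2 from rfl, mul_assoc,
    ← smul_eq_mul 2 (∑ i : Fin s, ∑ j : Fin s, if i < j then _ else 0),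
    ← sum_sum_eq_two_nsmul_sum_sum_ite_lt]
  · simp only [hcols, mul_sum]
  · simp [isUnit_sub2_iff, mul_comm, ne_comm]
  · simp [isUnit_sub2_iff, mul_comm]

def colOverlap (k l : Fin s) : ℕ := ∑ i, (M i k).val * (M i l).val

def rowWeight (i : Fin s) : ℕ := ∑ k, (M i k).val

def colWeight (k : Fin s) : ℕ := ∑ i, (M i k).val

theorem sum_colWeight : ∑ k, colWeight M k = ∑ i, rowWeight M i := sum_comm

theorem sum_ite_isUnit_sub2_add_two_mul_colOverlap_sq (k l : Fin s) :
    ∑ i, ∑ j, (if IsUnit (sub2 M i j k l) then (1 : ℕ) else 0) + 2 * colOverlap M k l ^ 2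
      = 2 * (colWeight M k * colWeight M l) := by
  rw [show 2 * (colWeight M k * colWeight M l)
      = colWeight M k * colWeight M l + colWeight M l * colWeight M k by ring,
    colOverlap, colWeight, colWeight, sq, sum_mul_sum, sum_mul_sum, sum_mul_sum]
  simp only [mul_sum, ← sum_add_distrib, isUnit_sub2_iff]
  exact sum_congr rfl fun i _ => sum_congr rfl fun j _ => ite_mul_ne_mul_add_two_mul_val ..

theorem two_mul_N2_add_sum_colOverlap_sq :
    2 * N2 M + ∑ k, ∑ l, colOverlap M k l ^ 2 = (∑ i, rowWeight M i) ^ 2 := by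
  have h : 4 * N2 M + 2 * ∑ k, ∑ l, colOverlap M k l ^ 2 = 2 * (∑ i, rowWeight M i) ^ 2 := by
    rw [four_mul_N2, sum_comm_pairs, mul_sum, ← sum_add_distrib]
    simp only [mul_sum, ← sum_add_distrib, sum_ite_isUnit_sub2_add_two_mul_colOverlap_sq]
    rw [← sum_colWeight, sq, sum_mul_sum, mul_sum]
    simp only [mul_sum]
  omega

theorem sum_sum_colOverlap : ∑ k, ∑ l, colOverlap M k l = ∑ i, rowWeight M i ^ 2 := by
  simp only [colOverlap, rowWeight, sq, sum_mul_sum]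
  exact (sum_congr rfl fun k _ => sum_comm).trans sum_comm

theorem sum_rowWeight_pow_four_le :
    (∑ i, rowWeight M i) ^ 4 ≤ s ^ 4 * ∑ k, ∑ l, colOverlap M k l ^ 2 := by
  have hrows : (∑ i, rowWeight M i) ^ 2 ≤ s * ∑ i, rowWeight M i ^ 2 := by
    simpa using sq_sum_le_card_mul_sum_sq (s := univ) (f := rowWeight M)
  have hpairs : (∑ k, ∑ l, colOverlap M k l) ^ 2 ≤ s ^ 2 * ∑ k, ∑ l, colOverlap M k l ^ 2 := by
    simpa [Fintype.sum_prod_type, sq] using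
      sq_sum_le_card_mul_sum_sq (s := univ) (f := fun p : Fin s × Fin s => colOverlap M p.1 p.2)
  calc (∑ i, rowWeight M i) ^ 4 = ((∑ i, rowWeight M i) ^ 2) ^ 2 := by ring
    _ ≤ (s * ∑ i, rowWeight M i ^ 2) ^ 2 := by gcongr
    _ = s ^ 2 * (∑ k, ∑ l, colOverlap M k l) ^ 2 := by rw [sum_sum_colOverlap]; ring
    _ ≤ s ^ 2 * (s ^ 2 * ∑ k, ∑ l, colOverlap M k l ^ 2) := by gcongr
    _ = s ^ 4 * ∑ k, ∑ l, colOverlap M k l ^ 2 := by ring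

theorem eight_mul_N2_le : 8 * N2 M ≤ s ^ 4 := by
  rcases s.eq_zero_or_pos with rfl | hs
  · simp [N2]
  have hid := two_mul_N2_add_sum_colOverlap_sq M
  have hcs := sum_rowWeight_pow_four_le M
  generalize N2 M = N, ∑ i, rowWeight M i = t, ∑ k, ∑ l, colOverlap M k l ^ 2 = Q at hid hcs ⊢
  have hN : s ^ 4 * (8 * N) + 4 * t ^ 4 ≤ 4 * s ^ 4 * t ^ 2 :=
    calc s ^ 4 * (8 * N) + 4 * t ^ 4 ≤ s ^ 4 * (8 * N) + 4 * (s ^ 4 * Q) := by gcongr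
      _ = 4 * s ^ 4 * t ^ 2 := by rw [← hid]; ring
  have hamgm := two_mul_le_add_sq (s ^ 4) (2 * t ^ 2)
  refine le_of_mul_le_mul_left ?_ (pow_pos hs 4)
  linarith

theorem R2_le_div_sub_one_sq_div_two :
    R2 M ≤ ((s : ℝ) / (s - 1)) ^ 2 / 2 := by
  rcases lt_or_ge s 2 with hs | hs
  · rw [R2, Nat.choose_eq_zero_of_lt hs, Nat.cast_zero, zero_pow two_ne_zero, div_zero]
    positivity
  have hs1 : (1 : ℝ) < s := by exact_mod_cast hs
  have hN2 : (8 * N2 M : ℝ) ≤ s ^ 4 := by exact_mod_cast eight_mul_N2_le M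
  rw [R2, Nat.cast_choose_two, div_le_iff₀ (by positivity)]
  calc (N2 M : ℝ) ≤ s ^ 4 / 8 := by linarith
    _ = _ := by field_simp [(sub_pos.2 hs1).ne']; norm_num

end

theorem R2_limsup_le_half :
    ∀ ε : ℝ, 0 < ε → ∃ S : ℕ, ∀ s : ℕ, S ≤ s → R2max s ≤ 1 / 2 + ε := by
  intro ε hε
  have hlim : Tendsto (fun s : ℕ => ((s : ℝ) / (s - 1)) ^ 2 / 2) atTop (𝓝 (1 / 2)) := by
    simpa [sub_eq_add_neg] using ((tendsto_natCast_div_add_atTop (-1 : ℝ)).pow 2).div_const 2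
  obtain ⟨S, hS⟩ := eventually_atTop.1 (hlim.eventually_lt_const (by linarith : 1 / 2 < 1 / 2 + ε))
  refine ⟨S, fun s hs => Real.sSup_le ?_ (by positivity)⟩
  rintro _ ⟨M, -, rfl⟩
  exact (R2_le_div_sub_one_sq_div_two M).trans (hS s hs).le
end
end

section
/- For every s ≥ 1 and every s×s matrix M over 𝔽₂, there exists an invertible s×s matrix N over 𝔽₂ such that N(i,j) = M(i,j) for all i ≠ j; that is, any binary matrix can be made invertible by modifying only entries on its main diagonal. -/
/-!
Choose the diagonal entries other than the `(0, 0)` one by induction, so that the minor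
complementary to `(0, 0)` has determinant `1`. The determinant is affine in the `(0, 0)` entry
with that minor as slope, so one more choice of that entry makes the determinant `1`.
The argument works over any commutative ring.
-/

namespace Matrix

variable {R n : Type*} [CommRing R] [Fintype n] [DecidableEq n]

theorem det_add_diagonal_single (A : Matrix n n R) (i : n) (t : R) :
    det (A + diagonal (Pi.single i t)) = det A + t * adjugate A i i := by
  have hrow : A + diagonal (Pi.single i t) = A.updateRow i (A i + t • Pi.single i 1) := by
    ext j k
    by_cases hj : j = i
    · subst hj
      simp [diagonal_apply, Pi.single_apply, eq_comm]
    · simp [hj, diagonal_apply]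
  rw [hrow, det_updateRow_add, updateRow_eq_self, det_updateRow_smul, adjugate_apply]

theorem exists_det_add_diagonal_eq_one {m : ℕ} (A : Matrix (Fin m) (Fin m) R) :
    ∃ d : Fin m → R, det (A + diagonal d) = 1 := by
  induction m with
  | zero => exact ⟨0, det_isEmpty⟩
  | succ m ih =>
    obtain ⟨d, hd⟩ := ih (A.submatrix Fin.succ Fin.succ)
    set B := A + diagonal (Fin.cons 0 d : Fin (m + 1) → R)
    have hminor : adjugate B 0 0 = 1 := by
      have hsub : B.submatrix Fin.succ Fin.succ = A.submatrix Fin.succ Fin.succ + diagonal d := by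
        rw [submatrix_add, Pi.add_apply, Pi.add_apply,
          submatrix_diagonal _ _ (Fin.succ_injective m), Fin.cons_comp_succ]
      rw [adjugate_fin_succ_eq_det_submatrix, Fin.succAbove_zero, hsub, hd]
      simp
    refine ⟨Fin.cons 0 d + Pi.single 0 (1 - det B), ?_⟩
    have hdiag : diagonal (Fin.cons 0 d + Pi.single 0 (1 - det B)) =
        diagonal (Fin.cons 0 d) + diagonal (Pi.single 0 (1 - det B)) := (diagonal_add _ _).symm
    rw [hdiag, ← add_assoc, det_add_diagonal_single, hminor]
    ring

end Matrix

theorem exists_invertible_diagonal_adjust_general (s : ℕ)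
    (M : Matrix (Fin s) (Fin s) (ZMod 2)) :
    ∃ N : Matrix (Fin s) (Fin s) (ZMod 2), IsUnit N ∧ ∀ i j : Fin s, i ≠ j → N i j = M i j := by
  obtain ⟨d, hd⟩ := M.exists_det_add_diagonal_eq_one
  refine ⟨M + Matrix.diagonal d, ?_, fun i j hij => ?_⟩
  · rw [Matrix.isUnit_iff_isUnit_det, hd]
    exact isUnit_one
  · simp [Matrix.diagonal_apply_ne d hij]

theorem exists_invertible_diagonal_adjust (s : ℕ) (hs : 1 ≤ s)
    (M : Matrix (Fin s) (Fin s) (ZMod 2)) :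
    ∃ N : Matrix (Fin s) (Fin s) (ZMod 2), IsUnit N ∧ ∀ i j : Fin s, i ≠ j → N i j = M i j :=
  exists_invertible_diagonal_adjust_general s M
end
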